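/- arXiv:2503.09752 — 3 statements merged into one kernel-verified Lean document; each statement's English description precedes it below -/
import Mathlib

section
/- Let K be a number field and let c, d : M → ℝ be two consistent maps (where M indexes pairs (L, w) of number fields with a place). If c(L, w) = d(L, w) for all finite extensions L/K and all places w of L, then c = d, i.e., c(L', w') = d(L', w') for every number field L' and every place w' of L'. -/
/-- A system of number fields and places: `NF` indexes number fields, `ext K L` means
`L` is a (finite) extension of `K`, `Place K` is the set of places of `K`, `below h w`
is the place of `K` lying below the place `w` of `L`, and for each place `v` of `K`
there are finitely many places of `L` above `v`. -/
structure PlaceSystem where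
  NF : Type
  ext : NF → NF → Prop
  ext_refl : ∀ K, ext K K
  Place : NF → Type
  below : ∀ {K L : NF}, ext K L → Place L → Place K
  finAbove : ∀ {K L : NF} (h : ext K L) (v : Place K),
    Fintype {w : Place L // below h w = v}
  /-- any two number fields admit a common finite extension (compositum) -/
  directed : ∀ K L, ∃ M, ext K M ∧ ext L M

/-- A map `c` on pairs (number field, place) is consistent if
`c(K,v) = ∑_{w ∣ v} c(L,w)` for every finite extension `L/K`. -/
def PlaceSystem.Consistent (P : PlaceSystem) (c : ∀ K : P.NF, P.Place K → ℝ) : Prop :=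
  ∀ (K L : P.NF) (h : P.ext K L) (v : P.Place K),
    c K v = (letI := P.finAbove h v; ∑ w : {w : P.Place L // P.below h w = v}, c L w.1)

theorem PlaceSystem.Consistent.eq_of_ext {P : PlaceSystem} {c d : ∀ K : P.NF, P.Place K → ℝ}
    (hc : P.Consistent c) (hd : P.Consistent d) {K L : P.NF} (h : P.ext K L)
    (hL : ∀ w : P.Place L, c L w = d L w) (v : P.Place K) : c K v = d K v := by
  rw [hc K L h v, hd K L h v]
  exact Finset.sum_congr rfl fun w _ => hL w.1

/-- If two consistent maps agree on all finite extensions of a fixed number field `K`,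
then they agree on every number field. -/
theorem stmt_7 (P : PlaceSystem) (c d : ∀ K : P.NF, P.Place K → ℝ)
    (hc : P.Consistent c) (hd : P.Consistent d) (K : P.NF)
    (hagree : ∀ (L : P.NF) (h : P.ext K L) (w : P.Place L), c L w = d L w) :
    ∀ (L' : P.NF) (w' : P.Place L'), c L' w' = d L' w' := by
  intro L' w'
  obtain ⟨M, hKM, hL'M⟩ := P.directed K L'
  exact hc.eq_of_ext hd hL'M (hagree M hKM) w'
end

section
/- Let c be a consistent map and α a nonzero algebraic number. If K and L are two number fields both containing α, then Σ_{v ∈ M_K} c(K, v) log‖α‖_v = Σ_{w ∈ M_L} c(L, w) log‖α‖_w. In particular Φ_c(α) := Σ_{v ∈ M_K} c(K, v) log‖α‖_v is well-defined independently of the field K containing α. -/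
open Function

theorem finsum_mul_comp_eq_finsum_fiberwise {α β R : Type*} [NonUnitalNonAssocSemiring R]
    (π : β → α) [∀ a, Fintype {b // π b = a}] (u : β → R) {g : α → R}
    (hg : (support g).Finite) :
    ∑ᶠ b, u b * g (π b) = ∑ᶠ a, (∑ b : {b // π b = a}, u b) * g a := by
  classical
  have hT : (π ⁻¹' support g).Finite :=
    hg.preimage' fun a _ => Set.finite_coe_iff.mp (Finite.of_fintype {b // π b = a})
  rw [finsum_eq_sum_of_support_subset _ (s := hT.toFinset) fun b hb => by
      simpa using right_ne_zero_of_mul hb,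
    finsum_eq_sum_of_support_subset _ (s := hg.toFinset) fun a ha => by
      simpa using right_ne_zero_of_mul ha,
    ← Finset.sum_fiberwise_of_maps_to (t := hg.toFinset) (g := π) fun b hb => by simpa using hb]
  refine Finset.sum_congr rfl fun a ha => ?_
  have hfibre : ∀ b, b ∈ {b ∈ hT.toFinset | π b = a} ↔ π b = a := fun b => by
    simp only [Finset.mem_filter, Set.Finite.mem_toFinset, Set.mem_preimage, and_iff_right_iff_imp]
    rintro rfl
    simpa using ha
  rw [Finset.sum_mul, Finset.sum_subtype _ hfibre]
  exact Finset.sum_congr rfl fun b _ => by rw [b.2]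

theorem PlaceSystem.Consistent.finsum_mul_comp_below {P : PlaceSystem}
    {c : ∀ K : P.NF, P.Place K → ℝ} (hc : P.Consistent c) {K L : P.NF} (h : P.ext K L)
    {g : P.Place K → ℝ} (hg : (support g).Finite) :
    ∑ᶠ w, c L w * g (P.below h w) = ∑ᶠ v, c K v * g v := by
  let := P.finAbove h
  rw [finsum_mul_comp_eq_finsum_fiberwise _ _ hg]
  exact finsum_congr fun v => by rw [hc K L h v]

/-- Here `A` stands for the nonzero algebraic numbers, `mem α K` for `α ∈ K`, and
`logv K v α` for `log‖α‖_v`. -/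
theorem stmt_11_general (P : PlaceSystem) (A : Type) (mem : A → P.NF → Prop)
    (logv : ∀ K : P.NF, P.Place K → A → ℝ)
    (hcompat : ∀ {K L : P.NF} (h : P.ext K L) (w : P.Place L) (α : A),
      mem α K → logv L w α = logv K (P.below h w) α)
    (hsupp : ∀ (K : P.NF) (α : A), mem α K →
      (Function.support fun v : P.Place K => logv K v α).Finite)
    (c : ∀ K : P.NF, P.Place K → ℝ) (hc : P.Consistent c)
    (α : A) (K L : P.NF) (hK : mem α K) (hL : mem α L) :
    ∑ᶠ v : P.Place K, c K v * logv K v α = ∑ᶠ w : P.Place L, c L w * logv L w α := by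
  obtain ⟨M, hKM, hLM⟩ := P.directed K L
  have sum_eq_sum_in_extension : ∀ K, P.ext K M → mem α K →
      ∑ᶠ v : P.Place K, c K v * logv K v α = ∑ᶠ w : P.Place M, c M w * logv M w α :=
    fun K hKM hK => by
      rw [← hc.finsum_mul_comp_below hKM (hsupp K α hK)]
      exact finsum_congr fun w => by rw [hcompat hKM w α hK]
  rw [sum_eq_sum_in_extension K hKM hK, sum_eq_sum_in_extension L hLM hL]

/-- Let `A` be the nonzero algebraic numbers, `mem α K` meaning `α ∈ K`, and
`logv K v α = log‖α‖_v` (with `‖·‖_w` extending `‖·‖_v` for `w ∣ v`, and only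
finitely many places of `K` with `log‖α‖_v ≠ 0`).  For a consistent map `c`, the
quantity `Φ_c(α) = ∑_{v ∈ M_K} c(K,v) log‖α‖_v` does not depend on the number
field `K` containing `α`. -/
theorem stmt_11 (P : PlaceSystem) (A : Type) (mem : A → P.NF → Prop)
    (logv : ∀ K : P.NF, P.Place K → A → ℝ)
    (hmem_mono : ∀ {α : A} {K L : P.NF}, P.ext K L → mem α K → mem α L)
    (hcompat : ∀ {K L : P.NF} (h : P.ext K L) (w : P.Place L) (α : A),
      mem α K → logv L w α = logv K (P.below h w) α)
    (hsupp : ∀ (K : P.NF) (α : A), mem α K →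
      (Function.support fun v : P.Place K => logv K v α).Finite)
    (c : ∀ K : P.NF, P.Place K → ℝ) (hc : P.Consistent c)
    (α : A) (K L : P.NF) (hK : mem α K) (hL : mem α L) :
    ∑ᶠ v : P.Place K, c K v * logv K v α = ∑ᶠ w : P.Place L, c L w * logv L w α :=
  stmt_11_general P A mem logv hcompat hsupp c hc α K L hK hL
end

section
/- Let K be a number field, v a place of K, and suppose there exists β ∈ K with ‖β‖_v < 1 and ‖β‖_w = 1 for all non-Archimedean places w ≠ v. Let c be a consistent map such that Φ_c(β) = 0 and c(K, u) = c(ℚ, ∞)·[K_u : ℚ_∞]/[K : ℚ] for all Archimedean places u of K. Then c(K, v) = c(ℚ, ∞)·[K_v : ℚ_v]/[K : ℚ]. -/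
/-!
Subtracting `c(ℚ,∞)` times the product formula from `Φ_c(β) = 0` gives
`∑_w (c(K,w) - c(ℚ,∞)·λ(K,w)) log‖β‖_w = 0`. The Archimedean terms vanish by the
normalisation of `c`, the non-Archimedean terms with `w ≠ v` vanish because `‖β‖_w = 1`,
so only `(c(K,v) - c(ℚ,∞)·λ(K,v)) log‖β‖_v = 0` is left, and `log‖β‖_v < 0`.
-/

theorem finsum_sub_mul_eq_zero {α R : Type*} [CommRing R] {a b g : α → R}
    (hg : g.HasFiniteSupport) (ha : ∑ᶠ w, a w * g w = 0) (hb : ∑ᶠ w, b w * g w = 0) :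
    ∑ᶠ w, (a w - b w) * g w = 0 := by
  simp_rw [sub_mul]
  rw [finsum_sub_distrib (hg.fun_mul_right a) (hg.fun_mul_right b), ha, hb, sub_zero]

theorem eq_of_finsum_sub_mul_eq_zero {α R : Type*} [CommRing R] [NoZeroDivisors R]
    {a b g : α → R} {v : α} (hsum : ∑ᶠ w, (a w - b w) * g w = 0)
    (hoff : ∀ w, w ≠ v → (a w - b w) * g w = 0) (hv : g v ≠ 0) :
    a v = b v := by
  have hsingle : (a v - b v) * g v = 0 := by
    rw [← finsum_eq_single _ v hoff, hsum]
  exact sub_eq_zero.mp ((mul_eq_zero.mp hsingle).resolve_right hv)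

theorem stmt_15_general (P : Type) (arch : P → Prop) (v : P)
    (nβ : P → ℝ) (hpos : ∀ w, 0 < nβ w) (hβv : nβ v < 1)
    (hβw : ∀ w, ¬ arch w → w ≠ v → nβ w = 1)
    (hfin : (Function.support fun w => Real.log (nβ w)).Finite)
    (c lam : P → ℝ) (r : ℝ)
    (harch : ∀ u, arch u → c u = r * lam u)
    (hprod : ∑ᶠ w, lam w * Real.log (nβ w) = 0)
    (hPhi : ∑ᶠ w, c w * Real.log (nβ w) = 0) :
    c v = r * lam v := by
  have hprod' : ∑ᶠ w, r * lam w * Real.log (nβ w) = 0 := by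
    simp_rw [mul_assoc]
    rw [← mul_finsum, hprod, mul_zero]
  refine eq_of_finsum_sub_mul_eq_zero (finsum_sub_mul_eq_zero hfin hPhi hprod')
    (fun w hw => ?_) (Real.log_neg (hpos v) hβv).ne
  by_cases hw_arch : arch w
  · rw [harch w hw_arch, sub_self, zero_mul]
  · rw [hβw w hw_arch hw, Real.log_one, mul_zero]

/-- Let `P` be the places of a number field `K`, `arch` the Archimedean ones,
`v` a non-Archimedean place, `lam w = [K_w : ℚ_w]/[K : ℚ]`, and `nβ w = ‖β‖_w` for
an element `β ∈ K` with `‖β‖_v < 1` and `‖β‖_w = 1` for all non-Archimedean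
`w ≠ v`.  Suppose the consistent map `c` satisfies `Φ_c(β) = 0` and
`c(K,u) = c(ℚ,∞)·λ(K,u)` for all Archimedean `u` (here `r = c(ℚ,∞)`), and the
product formula `∑_w λ(K,w) log‖β‖_w = 0` holds.  Then `c(K,v) = c(ℚ,∞)·λ(K,v)`. -/
theorem stmt_15 (P : Type) (arch : P → Prop) (v : P) (hv : ¬ arch v)
    (nβ : P → ℝ) (hpos : ∀ w, 0 < nβ w) (hβv : nβ v < 1)
    (hβw : ∀ w, ¬ arch w → w ≠ v → nβ w = 1)
    (hfin : (Function.support fun w => Real.log (nβ w)).Finite)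
    (c lam : P → ℝ) (r : ℝ)
    (harch : ∀ u, arch u → c u = r * lam u)
    (hprod : ∑ᶠ w, lam w * Real.log (nβ w) = 0)
    (hPhi : ∑ᶠ w, c w * Real.log (nβ w) = 0) :
    c v = r * lam v :=
  stmt_15_general P arch v nβ hpos hβv hβw hfin c lam r harch hprod hPhi
end
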